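/- arXiv:1203.1598 — 8 statements merged into one kernel-verified Lean document; each statement's English description precedes it below -/
import Mathlib

section
/- Let a ∈ ℂ, let U be an open neighborhood of a in ℂ, and let σ : ℂ → ℂ be holomorphic and injective on U. Then there exists a homeomorphism h of the Riemann sphere (the one-point compactification OnePoint ℂ of ℂ) and a neighborhood V ⊆ U of a such that for every z ∈ V one has h(z) = σ(z) (where points of ℂ are identified with their images in OnePoint ℂ). -/
/-!
A holomorphic map injective near `a` has nonzero derivative there: otherwise `σ - σ a = ψ ^ n`
near `a` with `n ≥ 2` and `ψ` a local coordinate at `a`, while `w ↦ w ^ n` is not injective near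
`0`. With an invertible strict derivative, `σ` is, on a small ball `B(a, 2r)`, a Lipschitz-small
perturbation of its linearisation at `a`; gluing the two with a Lipschitz cutoff equal to `1` on
`B(a, r)` gives a small perturbation of an invertible linear map on the whole plane, hence a
homeomorphism of `ℂ`, which extends to the one-point compactification.
-/

open Complex Filter Metric Set Topology NNReal

section Cutoff

variable {α F : Type*} [PseudoMetricSpace α] [NormedAddCommGroup F] [NormedSpace ℝ F]

theorem LipschitzOnWith.lipschitzWith_cutoff_smul {φ : α → ℝ≥0} {u : α → F} {s : Set α}
    {Kφ Ku M : ℝ≥0} (hu : LipschitzOnWith Ku u s) (huM : ∀ x ∈ s, ‖u x‖ ≤ M)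
    (hφ : LipschitzWith Kφ φ) (hφ_le : ∀ x, φ x ≤ 1) (hφ_zero : ∀ x ∉ s, φ x = 0) :
    LipschitzWith (Ku + Kφ * M) fun x ↦ (φ x : ℝ) • u x := by
  have key : ∀ x ∈ s, ∀ y, dist ((φ x : ℝ) • u x) ((φ y : ℝ) • u y) ≤
      (Ku + Kφ * M) * dist x y := by
    intro x hx y
    have hφxy : |(φ x : ℝ) - φ y| ≤ Kφ * dist x y := by
      simpa [← NNReal.dist_eq] using hφ.dist_le_mul x y
    have hφx : (φ x : ℝ) ≤ 1 := by exact_mod_cast hφ_le x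
    by_cases hy : y ∈ s
    · calc dist ((φ x : ℝ) • u x) ((φ y : ℝ) • u y)
          = ‖(φ x : ℝ) • (u x - u y) + ((φ x : ℝ) - φ y) • u y‖ := by
            rw [dist_eq_norm]; congr 1; module
        _ ≤ φ x * ‖u x - u y‖ + |(φ x : ℝ) - φ y| * ‖u y‖ := by
            refine (norm_add_le _ _).trans_eq ?_
            simp [norm_smul]
        _ ≤ 1 * (Ku * dist x y) + Kφ * dist x y * M := by
            gcongr
            · rw [← dist_eq_norm]; exact hu.dist_le_mul x hx y hy
            · exact huM y hy
        _ = (Ku + Kφ * M) * dist x y := by ring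
    · calc dist ((φ x : ℝ) • u x) ((φ y : ℝ) • u y)
          = |(φ x : ℝ) - φ y| * ‖u x‖ := by simp [hφ_zero y hy, dist_eq_norm, norm_smul]
        _ ≤ Kφ * dist x y * M := by gcongr; exact huM x hx
        _ ≤ (Ku + Kφ * M) * dist x y := by
            nlinarith [dist_nonneg (x := x) (y := y), Ku.coe_nonneg]
  refine LipschitzWith.of_dist_le_mul fun x y ↦ ?_
  by_cases hx : x ∈ s
  · exact key x hx y
  by_cases hy : y ∈ s
  · rw [dist_comm, dist_comm x]; exact key y hy x
  simp only [hφ_zero x hx, hφ_zero y hy, NNReal.coe_zero, zero_smul, dist_self]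
  positivity

end Cutoff

section Extension

variable {E F : Type*} [NormedAddCommGroup E] [NormedSpace ℝ E] [NormedAddCommGroup F]
  [NormedSpace ℝ F]

theorem ApproximatesLinearOn.exists_approximatesLinearOn_univ_eqOn {f : E → F} {f' : E →L[ℝ] F}
    {a : E} {r c : ℝ≥0} (hr : 0 < r) (hf : ApproximatesLinearOn f f' (ball a (2 * r)) c) :
    ∃ g : E → F, ApproximatesLinearOn g f' univ (3 * c) ∧ EqOn g f (closedBall a r) := by
  set u : E → F := f - ⇑f'
  have hr' : (0 : ℝ) < r := hr
  set φ := thickenedIndicator hr' (closedBall a r)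
  refine ⟨fun x ↦ f' x + (u a + (φ x : ℝ) • (u x - u a)), ?_, fun x hx ↦ ?_⟩
  · have hu : LipschitzOnWith c u (ball a (2 * r)) := hf.lipschitzOnWith
    have hu_bound : ∀ x ∈ ball a (2 * r), ‖u x - u a‖ ≤ c * (2 * r) := fun x hx ↦ by
      rw [← dist_eq_norm]
      exact (hu.dist_le_mul x hx a (mem_ball_self (by positivity))).trans
        (mul_le_mul_of_nonneg_left (mem_ball.1 hx).le c.coe_nonneg)
    have hu_sub : LipschitzOnWith c (fun x ↦ u x - u a) (ball a (2 * r)) := by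
      simpa only [LipschitzOnWith, edist_sub_right] using hu
    have hφ_zero : ∀ x ∉ ball a (2 * r), φ x = 0 := fun x hx ↦
      thickenedIndicator_zero hr' _ (by rwa [thickening_closedBall hr' hr'.le, ← two_mul])
    have hcut := hu_sub.lipschitzWith_cutoff_smul (M := c * (2 * r)) (by exact_mod_cast hu_bound)
      (lipschitzWith_thickenedIndicator hr' _) (thickenedIndicator_le_one hr' _) hφ_zero
    rw [approximatesLinearOn_iff_lipschitzOnWith, lipschitzOnWith_univ]
    have hK : 0 + (c + (r : ℝ).toNNReal⁻¹ * (c * (2 * r))) = 3 * c := by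
      rw [Real.toNNReal_coe, zero_add]; field_simp; ring
    have hg : (fun x ↦ f' x + (u a + (φ x : ℝ) • (u x - u a))) - ⇑f' =
        fun x ↦ u a + (φ x : ℝ) • (u x - u a) := by
      ext x; simp
    rw [hg, ← hK]
    exact (LipschitzWith.const (u a)).add hcut
  · simp [φ, thickenedIndicator_one hr' _ hx, u]

theorem HasStrictFDerivAt.exists_homeomorph_eventuallyEq [CompleteSpace E] {f : E → F}
    {f' : E ≃L[ℝ] F} {a : E} (hf : HasStrictFDerivAt f (f' : E →L[ℝ] F) a) :
    ∃ h : E ≃ₜ F, ∀ᶠ x in 𝓝 a, h x = f x := by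
  set N := ‖(f'.symm : F →L[ℝ] E)‖₊
  obtain ⟨s, hs, hfs⟩ := hf.approximates_deriv_on_nhds (c := N⁻¹ / 6)
    (f'.subsingleton_or_nnnorm_symm_pos.imp id fun hN ↦ by positivity)
  obtain ⟨r, hr, hrs⟩ : ∃ r : ℝ≥0, 0 < r ∧ ball a (2 * r) ⊆ s := by
    obtain ⟨ε, hε, hεs⟩ := Metric.mem_nhds_iff.1 hs
    refine ⟨(ε / 2).toNNReal, by simpa using hε, ?_⟩
    rwa [Real.coe_toNNReal _ (by positivity), mul_div_cancel₀ _ two_ne_zero]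
  obtain ⟨g, hg, hgf⟩ := (hfs.mono_set hrs).exists_approximatesLinearOn_univ_eqOn hr
  refine ⟨hg.toHomeomorph g (f'.subsingleton_or_nnnorm_symm_pos.imp id fun hN ↦ ?_), ?_⟩
  · calc 3 * (N⁻¹ / 6) = N⁻¹ / 2 := by ring
      _ < N⁻¹ := NNReal.half_lt_self (inv_pos.2 hN).ne'
  · filter_upwards [closedBall_mem_nhds a hr] with x hx using hgf hx

end Extension

namespace Complex

theorem not_injOn_pow_of_mem_nhds_zero {n : ℕ} (hn : 2 ≤ n) {s : Set ℂ} (hs : s ∈ 𝓝 0) :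
    ¬ InjOn (· ^ n) s := by
  intro hinj
  obtain ⟨ζ, hζ⟩ : ∃ ζ : ℂ, IsPrimitiveRoot ζ n := ⟨_, isPrimitiveRoot_exp n (by omega)⟩
  have hζs : ∀ᶠ w in 𝓝 (0 : ℂ), ζ * w ∈ s :=
    (continuous_const_mul ζ).tendsto' 0 0 (mul_zero ζ) hs
  obtain ⟨w, ⟨hws, hζws⟩, hw⟩ :=
    ((Eventually.and hs hζs).filter_mono nhdsWithin_le_nhds).and
      (self_mem_nhdsWithin (s := {0}ᶜ)) |>.exists
  have hζw : ζ * w = w := hinj hζws hws (by simp [mul_pow, hζ.pow_eq_one])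
  exact hζ.ne_one (by omega) (mul_right_cancel₀ hw (hζw.trans (one_mul w).symm))

theorem not_injOn_pow_comp_of_hasStrictDerivAt {ψ : ℂ → ℂ} {ψ' a : ℂ}
    (hψ : HasStrictDerivAt ψ ψ' a) (hψ' : ψ' ≠ 0) (hψa : ψ a = 0) {n : ℕ} (hn : 2 ≤ n)
    {s : Set ℂ} (hs : s ∈ 𝓝 a) : ¬ InjOn (fun z ↦ ψ z ^ n) s := by
  intro hinj
  have hψs : ψ '' s ∈ 𝓝 0 := by
    rw [← hψa, ← hψ.map_nhds_eq hψ']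
    exact image_mem_map hs
  exact not_injOn_pow_of_mem_nhds_zero hn hψs hinj.image_of_comp

end Complex

theorem AnalyticAt.exists_pow_eq {g : ℂ → ℂ} {a : ℂ} (hg : AnalyticAt ℂ g a) (hga : g a ≠ 0)
    {n : ℕ} (hn : n ≠ 0) : ∃ h : ℂ → ℂ, AnalyticAt ℂ h a ∧ ∀ z, h z ^ n = g z := by
  obtain ⟨c, hc⟩ := IsAlgClosed.exists_pow_nat_eq (g a) (Nat.pos_of_ne_zero hn)
  refine ⟨fun z ↦ c * (g z / g a) ^ (n⁻¹ : ℂ), ?_, fun z ↦ ?_⟩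
  · exact analyticAt_const.mul <| (hg.div analyticAt_const hga).cpow analyticAt_const
      (by simp [hga, one_mem_slitPlane])
  · rw [mul_pow, cpow_nat_inv_pow _ hn, hc, mul_div_cancel₀ _ hga]

theorem AnalyticAt.exists_eventuallyEq_pow {f : ℂ → ℂ} {a : ℂ} (hf : AnalyticAt ℂ f a) {n : ℕ}
    (hn : analyticOrderAt f a = n) (hn0 : n ≠ 0) :
    ∃ ψ : ℂ → ℂ, AnalyticAt ℂ ψ a ∧ ψ a = 0 ∧ deriv ψ a ≠ 0 ∧
      f =ᶠ[𝓝 a] fun z ↦ ψ z ^ n := by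
  obtain ⟨g, hg, hga, hfg⟩ := hf.analyticOrderAt_eq_natCast.1 hn
  obtain ⟨h, hh, hhg⟩ := hg.exists_pow_eq hga hn0
  have hψ : HasDerivAt (fun z ↦ (z - a) * h z) (h a) a := by
    simpa using ((hasDerivAt_id a).sub_const a).fun_mul hh.differentiableAt.hasDerivAt
  refine ⟨fun z ↦ (z - a) * h z, by fun_prop, by simp, ?_, ?_⟩
  · rw [hψ.deriv]
    intro hha
    exact hga (by rw [← hhg, hha, zero_pow hn0])
  · filter_upwards [hfg] with z hz
    rw [hz, mul_pow, hhg, smul_eq_mul]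

theorem AnalyticAt.deriv_ne_zero_of_injOn {f : ℂ → ℂ} {a : ℂ} {s : Set ℂ}
    (hf : AnalyticAt ℂ f a) (hs : s ∈ 𝓝 a) (hinj : InjOn f s) : deriv f a ≠ 0 := by
  intro hd
  set F := fun z ↦ f z - f a
  have hF : AnalyticAt ℂ F a := by fun_prop
  have htop : analyticOrderAt F a ≠ ⊤ := by
    rw [Ne, analyticOrderAt_eq_top]
    intro hF0
    obtain ⟨z, ⟨hz0, hzs⟩, hza⟩ := ((Eventually.and hF0 hs).filter_mono
      nhdsWithin_le_nhds).and (self_mem_nhdsWithin (s := {a}ᶜ)) |>.exists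
    exact hza (hinj hzs (mem_of_mem_nhds hs) (sub_eq_zero.1 hz0))
  have h2 : 2 ≤ analyticOrderNatAt F a := by
    have hsucc : analyticOrderAt (deriv f) a + 1 = analyticOrderNatAt F a := by
      rw [Nat.cast_analyticOrderNatAt htop]
      exact hf.analyticOrderAt_deriv_add_one
    have hd1 : 1 ≤ analyticOrderAt (deriv f) a :=
      Order.one_le_iff_ne_zero.2 (hf.deriv.analyticOrderAt_ne_zero.2 hd)
    have : (2 : ℕ∞) ≤ analyticOrderNatAt F a := by
      rw [← hsucc, ← one_add_one_eq_two]
      gcongr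
    exact_mod_cast this
  obtain ⟨ψ, hψ, hψa, hψ', hFψ⟩ :=
    hF.exists_eventuallyEq_pow (Nat.cast_analyticOrderNatAt htop).symm (by omega)
  refine not_injOn_pow_comp_of_hasStrictDerivAt hψ.hasStrictDerivAt hψ' hψa h2
    (inter_mem hs hFψ) fun z hz w hw hzw ↦ hinj hz.1 hw.1 ?_
  have hz' : f z - f a = ψ z ^ _ := hz.2
  have hw' : f w - f a = ψ w ^ _ := hw.2
  exact sub_left_inj.1 (hz'.trans (hzw.trans hw'.symm))

/-- Any germ of automorphism of a neighborhood of a point of ℙ¹ = OnePoint ℂ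
(represented in a chart by a holomorphic injective map on an open neighborhood
of `a` in ℂ) coincides near that point with a global homeomorphism of ℙ¹. -/
theorem stmt_0 (a : ℂ) (U : Set ℂ) (hU : IsOpen U) (haU : a ∈ U)
    (σ : ℂ → ℂ) (hσ : DifferentiableOn ℂ σ U) (hinj : Set.InjOn σ U) :
    ∃ (h : Homeomorph (OnePoint ℂ) (OnePoint ℂ)) (V : Set ℂ),
      V ⊆ U ∧ V ∈ nhds a ∧ ∀ z ∈ V, h (z : OnePoint ℂ) = (σ z : OnePoint ℂ) := by
  have hσa : AnalyticAt ℂ σ a := hσ.analyticAt (hU.mem_nhds haU)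
  have hd : deriv σ a ≠ 0 := hσa.deriv_ne_zero_of_injOn (hU.mem_nhds haU) hinj
  set e : ℂ ≃L[ℝ] ℂ :=
    (ContinuousLinearEquiv.unitsEquivAut ℂ (Units.mk0 _ hd)).restrictScalars ℝ
  have he : HasStrictFDerivAt σ (e : ℂ →L[ℝ] ℂ) a :=
    (hσa.hasStrictDerivAt.hasStrictFDerivAt_equiv hd).restrictScalars ℝ
  obtain ⟨h, hh⟩ := he.exists_homeomorph_eventuallyEq
  exact ⟨h.onePointCongr, U ∩ {z | h z = σ z}, inter_subset_left,
    inter_mem (hU.mem_nhds haU) hh, fun z hz ↦ congrArg _ hz.2⟩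
end

section
/- Fix an integer n ≥ 2. Let P and Q be homogeneous polynomials of degree n in ℂ[x,y]. If x·∂Q/∂x − y·∂P/∂x − Q = 0 and x·∂Q/∂y − y·∂P/∂y + P = 0, then P = 0 and Q = 0. In other words, the linear endomorphism L(P,Q) = (x·∂Q/∂x − y·∂P/∂x − Q, x·∂Q/∂y − y·∂P/∂y + P) of the space of pairs of homogeneous polynomials of degree n is injective (hence, by finite-dimensionality, a linear isomorphism). -/
open MvPolynomial

/-
Summing `x · h₁ + y · h₂` and applying Euler's identity `x ∂ₓF + y ∂ᵧF = n F` to `P` and `Q`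
gives `(n - 1)(x Q - y P) = 0`, so `x Q = y P`. Differentiating this in `x` gives
`Q + x ∂ₓQ = y ∂ₓP`, which together with `h₁` forces `2 Q = 0`; then `y P = x Q = 0`.
-/

namespace MvPolynomial

theorem IsHomogeneous.X_zero_mul_pderiv_add_X_one_mul_pderiv {R : Type*} [CommSemiring R]
    {n : ℕ} {P : MvPolynomial (Fin 2) R} (hP : P.IsHomogeneous n) :
    X 0 * pderiv 0 P + X 1 * pderiv 1 P = (n : MvPolynomial (Fin 2) R) * P := by
  simpa [Fin.sum_univ_two, nsmul_eq_mul] using hP.sum_X_mul_pderiv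

variable {R : Type*} [CommRing R] [IsDomain R] [CharZero R]
  {n : ℕ} {P Q : MvPolynomial (Fin 2) R}

theorem X_zero_mul_eq_X_one_mul_of_isHomogeneous (hn : n ≠ 1)
    (hP : P.IsHomogeneous n) (hQ : Q.IsHomogeneous n)
    (h1 : X 0 * pderiv 0 Q - X 1 * pderiv 0 P - Q = 0)
    (h2 : X 0 * pderiv 1 Q - X 1 * pderiv 1 P + P = 0) :
    X 0 * Q = X 1 * P := by
  have key : ((n : MvPolynomial (Fin 2) R) - 1) * (X 0 * Q - X 1 * P) = 0 := by
    linear_combination X 0 * h1 + X 1 * h2 - X 0 * hQ.X_zero_mul_pderiv_add_X_one_mul_pderiv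
      + X 1 * hP.X_zero_mul_pderiv_add_X_one_mul_pderiv
  have hn' : (n : MvPolynomial (Fin 2) R) - 1 ≠ 0 := sub_ne_zero.mpr (by exact_mod_cast hn)
  exact sub_eq_zero.mp ((mul_eq_zero.mp key).resolve_left hn')

theorem eq_zero_of_X_zero_mul_eq_X_one_mul (hPQ : X 0 * Q = X 1 * P)
    (h1 : X 0 * pderiv 0 Q - X 1 * pderiv 0 P - Q = 0) :
    P = 0 ∧ Q = 0 := by
  have hd := congrArg (pderiv 0) hPQ
  rw [pderiv_mul, pderiv_mul, pderiv_X_self, pderiv_X_of_ne (by decide)] at hd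
  have h2Q : (2 : MvPolynomial (Fin 2) R) * Q = 0 := by linear_combination hd - h1
  have hQ : Q = 0 := (mul_eq_zero.mp h2Q).resolve_left two_ne_zero
  rw [hQ, mul_zero, eq_comm] at hPQ
  exact ⟨(mul_eq_zero.mp hPQ).resolve_left (X_ne_zero 1), hQ⟩

end MvPolynomial

/-- The linear map `L(P,Q) = (x·∂Q/∂x − y·∂P/∂x − Q, x·∂Q/∂y − y·∂P/∂y + P)` on
pairs of homogeneous polynomials of degree `n ≥ 2` in `ℂ[x,y]` is injective. -/
theorem stmt_1 (n : ℕ) (hn : 2 ≤ n) (P Q : MvPolynomial (Fin 2) ℂ)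
    (hP : P.IsHomogeneous n) (hQ : Q.IsHomogeneous n)
    (h1 : X 0 * pderiv 0 Q - X 1 * pderiv 0 P - Q = 0)
    (h2 : X 0 * pderiv 1 Q - X 1 * pderiv 1 P + P = 0) :
    P = 0 ∧ Q = 0 :=
  eq_zero_of_X_zero_mul_eq_X_one_mul
    (X_zero_mul_eq_X_one_mul_of_isHomogeneous (by omega) hP hQ h1 h2) h1
end

section
/- Let a, b ∈ ℂ with a ≠ 0, and let h(z) = z/(a+bz) be the associated homography fixing 0, so h'(z) = a/(a+bz)². Assume a is not a root of unity (equivalently, h'(0) = 1/a is not a root of unity). If f : ℂ → ℂ is analytic at 0 and satisfies f(z/(a+bz)) · (a/(a+bz)²)² = f(z) for all z in some neighborhood of 0, then f vanishes on a neighborhood of 0. -/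
/-!
Write `f = zⁿ g` with `g 0 ≠ 0`, `n` the (finite) order of `f` at `0`. Since `h z = z · (a + bz)⁻¹`,
dividing the functional equation by `zⁿ` and letting `z → 0` gives `g 0 = a⁻ⁿ · a⁻² · g 0`, so
`a ^ (n + 2) = 1`. Hence the order must be infinite, i.e. `f` vanishes near `0`.
-/

open Filter Topology

theorem AnalyticAt.pow_mul_eq_one_of_eventually_comp_mul_eq {𝕜 : Type*}
    [NontriviallyNormedField 𝕜] {f u μ : 𝕜 → 𝕜} {n : ℕ} (hf : AnalyticAt 𝕜 f 0)
    (hn : analyticOrderAt f 0 = n) (hu : ContinuousAt u 0) (hμ : ContinuousAt μ 0)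
    (heq : ∀ᶠ z in 𝓝 0, f (z * u z) * μ z = f z) :
    u 0 ^ n * μ 0 = 1 := by
  obtain ⟨g, hg, hg0, hfg⟩ := hf.analyticOrderAt_eq_natCast.mp hn
  have hzu : ContinuousAt (fun z => z * u z) 0 := by fun_prop
  have hzu_tendsto : Tendsto (fun z => z * u z) (𝓝 0) (𝓝 0) := by simpa using hzu.tendsto
  set F : 𝕜 → 𝕜 := fun z => u z ^ n * g (z * u z) * μ z
  have hF : ContinuousAt F 0 :=
    ((hu.pow n).mul (ContinuousAt.comp (by simpa using hg.continuousAt) hzu)).mul hμ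
  have hFg : F =ᶠ[𝓝[≠] 0] g := by
    filter_upwards [nhdsWithin_le_nhds heq, nhdsWithin_le_nhds hfg,
      nhdsWithin_le_nhds (hzu_tendsto.eventually hfg), self_mem_nhdsWithin]
      with z hz_eq hfz hfzu hz
    rw [hfz, hfzu] at hz_eq
    simp only [sub_zero, smul_eq_mul, mul_pow] at hz_eq
    refine mul_left_cancel₀ (pow_ne_zero n hz) ?_
    linear_combination hz_eq
  have hF0 : F 0 = g 0 :=
    tendsto_nhds_unique ((hF.tendsto.mono_left nhdsWithin_le_nhds).congr' hFg)
      (hg.continuousAt.tendsto.mono_left nhdsWithin_le_nhds)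
  simp only [F, zero_mul] at hF0
  refine mul_right_cancel₀ hg0 ?_
  linear_combination hF0

/-- If `h(z) = z/(a+bz)` with `a` not a root of unity, and `f` is analytic at `0`
with `(f ∘ h) · (h′)² = f` near `0`, then `f` vanishes near `0`. -/
theorem stmt_2 (a b : ℂ) (ha : a ≠ 0) (hru : ∀ n : ℕ, 0 < n → a ^ n ≠ 1)
    (f : ℂ → ℂ) (hf : AnalyticAt ℂ f 0)
    (heq : ∀ᶠ z in nhds (0 : ℂ), f (z / (a + b * z)) * (a / (a + b * z) ^ 2) ^ 2 = f z) :
    ∀ᶠ z in nhds (0 : ℂ), f z = 0 := by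
  cases hn : analyticOrderAt f 0 with
  | top => exact analyticOrderAt_eq_top.mp hn
  | coe n =>
    have key := hf.pow_mul_eq_one_of_eventually_comp_mul_eq hn
      (u := fun z => (a + b * z)⁻¹) (μ := fun z => (a / (a + b * z) ^ 2) ^ 2)
      (by fun_prop (disch := simp [ha])) (by fun_prop (disch := simp [ha]))
      (heq.mono fun z hz => by rwa [div_eq_mul_inv z] at hz)
    refine absurd ?_ (hru (n + 2) (by omega))
    simp only [mul_zero, add_zero] at key
    field_simp at key
    rw [pow_add, ← key, ← mul_pow, mul_one_div_cancel ha, one_pow]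
end

section
/- Let b ∈ ℂ with b ≠ 0, and let h(z) = z/(1+bz) be the associated homography fixing 0 and tangent to the identity, so h'(z) = 1/(1+bz)². If f : ℂ → ℂ is analytic at 0 and satisfies f(z/(1+bz)) · (1/(1+bz)²)² = f(z) for all z in some neighborhood of 0, then f vanishes on a neighborhood of 0. -/
open Filter Topology

/-! The `k`-th iterate of `h(z) = z/(1+bz)` is `z ↦ z/(1+kbz)`, so iterating the functional
equation gives `f(z/(1+kbz)) = (1+kbz)⁴ f(z)`. On the ray `bz > 0` the orbit stays in the given
neighbourhood and tends to `0` while `(1+kbz)⁴ → ∞`; continuity of `f` at `0` then forces `f(z) = 0`.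
So `f` vanishes on a ray ending at `0`, hence near `0` by the identity theorem. -/

theorem apply_div_one_add_nat_mul_eq {𝕜 : Type*} [Field 𝕜] {f : 𝕜 → 𝕜} {b z : 𝕜} {S : Set 𝕜}
    (hS : ∀ w ∈ S, f (w / (1 + b * w)) * (1 / (1 + b * w) ^ 2) ^ 2 = f w)
    (hmem : ∀ k : ℕ, z / (1 + k * (b * z)) ∈ S) (hne : ∀ k : ℕ, 1 + k * (b * z) ≠ 0) (k : ℕ) :
    f (z / (1 + k * (b * z))) = (1 + k * (b * z)) ^ 4 * f z := by
  induction k with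
  | zero => simp
  | succ k ih =>
    have h := hS _ (hmem k)
    have hd' := hne (k + 1)
    push_cast at hd' ⊢
    set d := 1 + k * (b * z)
    set d' := 1 + (k + 1) * (b * z)
    have hstep : 1 + b * (z / d) = d' / d := by
      rw [← mul_div_assoc, one_add_div (hne k)]
      ring
    rw [hstep, div_div_div_cancel_right₀ (hne k), ih] at h
    field_simp at h
    exact mul_right_cancel₀ (pow_ne_zero 4 (hne k)) (h.trans (by ring))

theorem eq_zero_of_apply_eq_mul {X 𝕜 ι : Type*} [TopologicalSpace X] [NormedField 𝕜]
    {l : Filter ι} [l.NeBot] {f : X → 𝕜} {x₀ z : X} {u : ι → X} {d : ι → 𝕜}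
    (hf : ContinuousAt f x₀) (hu : Tendsto u l (𝓝 x₀)) (hd : Tendsto (‖d ·‖) l atTop)
    (h : ∀ k, f (u k) = d k * f z) : f z = 0 := by
  have hlim : Tendsto (fun k => f (u k) * (d k)⁻¹) l (𝓝 (f x₀ * 0)) :=
    (hf.tendsto.comp hu).mul (tendsto_inv₀_cobounded.comp (tendsto_norm_atTop_iff_cobounded.mp hd))
  have hconst : ∀ᶠ k in l, f (u k) * (d k)⁻¹ = f z := by
    filter_upwards [hd.eventually_gt_atTop 0] with k hk
    rw [h, mul_comm, inv_mul_cancel_left₀ (norm_pos_iff.mp hk)]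
  rw [mul_zero] at hlim
  exact tendsto_nhds_unique (tendsto_const_nhds.congr' (hconst.mono fun _ => Eq.symm)) hlim

theorem eq_zero_of_mul_eq_ofReal_pos {f : ℂ → ℂ} {b z : ℂ} {t ε : ℝ} (hf : ContinuousAt f 0)
    (hball : ∀ w ∈ Metric.ball (0 : ℂ) ε, f (w / (1 + b * w)) * (1 / (1 + b * w) ^ 2) ^ 2 = f w)
    (ht : 0 < t) (hbz : b * z = t) (hz : ‖z‖ < ε) : f z = 0 := by
  have hnorm : ∀ k : ℕ, ‖1 + k * (b * z)‖ = 1 + k * t := fun k => by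
    rw [hbz, ← Complex.ofReal_natCast, ← Complex.ofReal_mul, ← Complex.ofReal_one,
      ← Complex.ofReal_add, Complex.norm_real, Real.norm_of_nonneg (by positivity)]
  have hgrow : Tendsto (fun k : ℕ => ‖1 + k * (b * z)‖) atTop atTop := by
    simp only [hnorm]
    exact tendsto_atTop_add_const_left _ _
      ((tendsto_natCast_atTop_atTop (R := ℝ)).atTop_mul_const ht)
  have hne : ∀ k : ℕ, 1 + k * (b * z) ≠ 0 := fun k => by
    rw [← norm_pos_iff, hnorm]; positivity
  have hmem : ∀ k : ℕ, z / (1 + k * (b * z)) ∈ Metric.ball (0 : ℂ) ε := fun k => by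
    rw [mem_ball_zero_iff, norm_div, hnorm]
    refine lt_of_le_of_lt (div_le_self (norm_nonneg z) ?_) hz
    have : (0 : ℝ) ≤ k * t := by positivity
    linarith
  refine eq_zero_of_apply_eq_mul (l := atTop) (u := fun k : ℕ => z / (1 + k * (b * z))) hf ?_ ?_
    (apply_div_one_add_nat_mul_eq hball hmem hne)
  · simpa only [div_eq_mul_inv, mul_zero, Function.comp_def] using
      (tendsto_inv₀_cobounded.comp (tendsto_norm_atTop_iff_cobounded.mp hgrow)).const_mul z
  · simpa only [norm_pow, Function.comp_def] using
      (tendsto_pow_atTop (by norm_num : 4 ≠ 0)).comp hgrow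

/-- If `h(z) = z/(1+bz)` with `b ≠ 0`, and `f` is analytic at `0`
with `(f ∘ h) · (h′)² = f` near `0`, then `f` vanishes near `0`. -/
theorem stmt_3 (b : ℂ) (hb : b ≠ 0)
    (f : ℂ → ℂ) (hf : AnalyticAt ℂ f 0)
    (heq : ∀ᶠ z in nhds (0 : ℂ),
      f (z / (1 + b * z)) * (1 / (1 + b * z) ^ 2) ^ 2 = f z) :
    ∀ᶠ z in nhds (0 : ℂ), f z = 0 := by
  obtain ⟨ε, hε, hball⟩ := Metric.eventually_nhds_iff_ball.mp heq
  have hray : Tendsto (fun t : ℝ => (t : ℂ) / b) (𝓝[>] (0 : ℝ)) (𝓝 0) := by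
    simpa using ((Complex.continuous_ofReal.div_const b).tendsto 0).mono_left nhdsWithin_le_nhds
  have hzero : ∀ᶠ t : ℝ in 𝓝[>] 0, f (t / b) = 0 := by
    filter_upwards [self_mem_nhdsWithin, hray.eventually (Metric.ball_mem_nhds 0 hε)]
      with t ht hsmall
    exact eq_zero_of_mul_eq_ofReal_pos hf.continuousAt hball ht (mul_div_cancel₀ _ hb)
      (mem_ball_zero_iff.mp hsmall)
  have hpunct : Tendsto (fun t : ℝ => (t : ℂ) / b) (𝓝[>] (0 : ℝ)) (𝓝[≠] 0) := by
    refine tendsto_nhdsWithin_iff.mpr ⟨hray, ?_⟩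
    filter_upwards [self_mem_nhdsWithin] with t ht
    exact div_ne_zero (Complex.ofReal_ne_zero.mpr (ne_of_gt ht)) hb
  exact hf.frequently_zero_iff_eventually_zero.mp (hpunct.frequently hzero.frequently)
end

section
/- Let f : ℂ → ℂ be analytic at 0. If the set of pairs (a,b) ∈ ℂ × ℂ with a ≠ 0 such that f(z/(a+bz)) · (a/(a+bz)²)² = f(z) for all z in some neighborhood of 0 is infinite, then f vanishes on a neighborhood of 0. -/
open Filter Topology

/-! Write `f = z ^ n • g` near `0` with `g 0 ≠ 0`. For a symmetry `z ↦ z / (a + b z)`, cancelling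
`z ^ n` turns the functional equation into `g (z / (a + b z)) a² = g z (a + b z) ^ (n + 4)`.
At `z = 0` this forces `a ^ (n + 2) = 1`, and differentiating at `0` then determines `b` from `a`,
so there are at most `n + 2` symmetries. -/

lemma finite_setOf_pow_eq_one_and_mul_eq {K : Type*} [Field K] {k : ℕ} (hk : 0 < k) {c : K}
    (hc : c ≠ 0) (d : K) :
    {p : K × K | p.1 ^ k = 1 ∧ p.2 * c = d * (1 - p.1)}.Finite := by
  refine (((Polynomial.nthRootsFinset k (1 : K)).finite_toSet).image
    fun a => (a, d * (1 - a) / c)).subset ?_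
  rintro ⟨a, b⟩ ⟨ha, hb⟩
  refine ⟨a, by simpa [Polynomial.mem_nthRootsFinset hk] using ha, ?_⟩
  simp [← hb, hc]

section Homography

variable {𝕜 : Type*} [NontriviallyNormedField 𝕜] {a b : 𝕜}

lemma continuousAt_homography (ha : a ≠ 0) :
    ContinuousAt (fun z : 𝕜 => z / (a + b * z)) 0 :=
  continuousAt_id.div (by fun_prop) (by simpa using ha)

lemma hasDerivAt_const_add_mul (x : 𝕜) : HasDerivAt (fun z : 𝕜 => a + b * z) b x := by
  simpa using ((hasDerivAt_id x).const_mul b).const_add a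

lemma hasDerivAt_homography (ha : a ≠ 0) :
    HasDerivAt (fun z : 𝕜 => z / (a + b * z)) a⁻¹ 0 := by
  refine ((hasDerivAt_id (0 : 𝕜)).div (hasDerivAt_const_add_mul 0) (by simpa using ha)).congr_deriv
    (by simp [sq])

lemma eventually_mul_sq_eq_mul_pow_of_symmetry {g : 𝕜 → 𝕜} (hg : ContinuousAt g 0) (n : ℕ)
    (ha : a ≠ 0)
    (hsym : ∀ᶠ z in 𝓝 0, (z / (a + b * z)) ^ n * g (z / (a + b * z)) * (a / (a + b * z) ^ 2) ^ 2
      = z ^ n * g z) :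
    ∀ᶠ z in 𝓝 0, g (z / (a + b * z)) * a ^ 2 = g z * (a + b * z) ^ (n + 4) := by
  have hcont : ContinuousAt (fun z => g (z / (a + b * z)) * a ^ 2) 0 :=
    (ContinuousAt.comp (by simpa using hg) (continuousAt_homography ha)).mul continuousAt_const
  -- `z ^ n` can only be cancelled for `z ≠ 0`; continuity extends the identity to `0`.
  refine (hcont.eventuallyEq_nhds_iff_eventuallyEq_nhdsNE (by fun_prop)).mp ?_
  have hden : ∀ᶠ z in 𝓝 (0 : 𝕜), a + b * z ≠ 0 :=
    (ContinuousAt.eventually_ne (by fun_prop) (by simpa using ha))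
  filter_upwards [eventually_nhdsWithin_of_eventually_nhds (hsym.and hden),
    self_mem_nhdsWithin] with z ⟨hz, hz_den⟩ (hz0 : z ≠ 0)
  rw [div_pow, div_pow] at hz
  field_simp at hz
  linear_combination hz

lemma pow_add_two_eq_one_of_eventually {g : 𝕜 → 𝕜} {n : ℕ} (hg0 : g 0 ≠ 0) (ha : a ≠ 0)
    (h : ∀ᶠ z in 𝓝 0, g (z / (a + b * z)) * a ^ 2 = g z * (a + b * z) ^ (n + 4)) :
    a ^ (n + 2) = 1 := by
  have h0 : g 0 * a ^ 2 = g 0 * a ^ (n + 4) := by simpa using h.self_of_nhds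
  refine mul_left_cancel₀ (mul_ne_zero hg0 (pow_ne_zero 2 ha)) ?_
  linear_combination -h0

lemma mul_eq_deriv_mul_of_eventually {g : 𝕜 → 𝕜} {n : ℕ} (hg : DifferentiableAt 𝕜 g 0)
    (ha : a ≠ 0) (hpow : a ^ (n + 2) = 1)
    (h : ∀ᶠ z in 𝓝 0, g (z / (a + b * z)) * a ^ 2 = g z * (a + b * z) ^ (n + 4)) :
    b * ((n + 4) * g 0) = deriv g 0 * (1 - a) := by
  have hlhs : HasDerivAt (fun z => g (z / (a + b * z)) * a ^ 2) (deriv g 0 * a⁻¹ * a ^ 2) 0 := by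
    have hg' : HasDerivAt g (deriv g 0) (0 / (a + b * 0)) := by simpa using hg.hasDerivAt
    exact (hg'.comp 0 (hasDerivAt_homography ha)).mul_const _
  have hrhs : HasDerivAt (fun z => g z * (a + b * z) ^ (n + 4))
      (deriv g 0 * a ^ (n + 4) + g 0 * ((n + 4 : ℕ) * a ^ (n + 3) * b)) 0 := by
    refine (hg.hasDerivAt.mul ((hasDerivAt_const_add_mul 0).pow (n + 4))).congr_deriv ?_
    simp
  have hderiv := hlhs.unique (hrhs.congr_of_eventuallyEq h)
  push_cast at hderiv
  field_simp at hderiv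
  refine mul_left_cancel₀ ha ?_
  linear_combination -hderiv - (a * b * (n + 4) * g 0 + deriv g 0 * a ^ 2) * hpow

lemma pow_eq_one_and_mul_eq_of_symmetry {f g : 𝕜 → 𝕜} {n : ℕ} (hg : DifferentiableAt 𝕜 g 0)
    (hg0 : g 0 ≠ 0) (hfg : ∀ᶠ z in 𝓝 0, f z = z ^ n • g z) (ha : a ≠ 0)
    (hsym : ∀ᶠ z in 𝓝 0, f (z / (a + b * z)) * (a / (a + b * z) ^ 2) ^ 2 = f z) :
    a ^ (n + 2) = 1 ∧ b * ((n + 4) * g 0) = deriv g 0 * (1 - a) := by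
  have hfg_comp :
      ∀ᶠ z in 𝓝 0, f (z / (a + b * z)) = (z / (a + b * z)) ^ n • g (z / (a + b * z)) :=
    (continuousAt_homography ha).tendsto.eventually (by simpa using hfg)
  have h := eventually_mul_sq_eq_mul_pow_of_symmetry hg.continuousAt n ha <| by
    filter_upwards [hsym, hfg, hfg_comp] with z hz hfz hfhz
    rwa [hfz, hfhz, smul_eq_mul, smul_eq_mul] at hz
  have hpow := pow_add_two_eq_one_of_eventually hg0 ha h
  exact ⟨hpow, mul_eq_deriv_mul_of_eventually hg ha hpow h⟩

end Homography

/-- If `f` is analytic at `0` and the set of homographies `h(z) = z/(a+bz)` (with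
`a ≠ 0`) satisfying `(f ∘ h) · (h′)² = f` near `0` is infinite, then `f` vanishes
near `0`. -/
theorem stmt_4 (f : ℂ → ℂ) (hf : AnalyticAt ℂ f 0)
    (hinf : {p : ℂ × ℂ | p.1 ≠ 0 ∧
      ∀ᶠ z in nhds (0 : ℂ),
        f (z / (p.1 + p.2 * z)) * (p.1 / (p.1 + p.2 * z) ^ 2) ^ 2 = f z}.Infinite) :
    ∀ᶠ z in nhds (0 : ℂ), f z = 0 := by
  by_contra hne
  obtain ⟨n, g, hg, hg0, hfg⟩ := hf.exists_eventuallyEq_pow_smul_nonzero_iff.mpr hne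
  have hc : ((n : ℂ) + 4) * g 0 ≠ 0 := mul_ne_zero (by norm_cast) hg0
  refine hinf <|
    (finite_setOf_pow_eq_one_and_mul_eq (k := n + 2) (by omega) hc (deriv g 0)).subset ?_
  rintro ⟨a, b⟩ ⟨ha, hsym⟩
  exact pow_eq_one_and_mul_eq_of_symmetry hg.differentiableAt hg0 (by simpa using hfg) ha hsym
end

section
/- Let σ : ℂ → ℂ be analytic at 0 with σ(0) = 0 and σ′(0) ≠ 0. Call a pair (a,b) ∈ ℂ × ℂ with a ≠ 0 a homographic symmetry of σ if there exist c, d ∈ ℂ with c ≠ 0 such that σ(z/(a+bz)) / (c + d·σ(z/(a+bz))) = σ(z) for all z in some neighborhood of 0 (i.e. h₁∘σ∘h = σ as germs at 0, where h(z) = z/(a+bz) and h₁(w) = w/(c+dw)). If the set of homographic symmetries of σ is infinite, then σ is itself a homography: there exist a′, b′ ∈ ℂ with a′ ≠ 0 such that σ(z) = z/(a′+b′z) for all z in some neighborhood of 0; moreover in that case every pair (a,b) with a ≠ 0 is a homographic symmetry of σ. -/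
/-!
Write `σ z = z / τ z` with `τ` analytic and `τ 0 ≠ 0`. A homographic symmetry `(a, b)` of `σ`
becomes the linear functional equation `a τ(z) = (a + bz) τ(z/(a+bz)) + dz`, which sends affine
functions to affine functions. Hence, writing `τ = t₀ + t₁z + z²K`, the remainder satisfies
`a (a + bz) K(z) = K(z/(a+bz))`. If `K ≢ 0`, write `K = zᵐ H` with `H 0 ≠ 0`; comparing values and
derivatives at `0` gives `a ^ (m + 2) = 1` and `(m + 1) b H(0) = H'(0) (1 - a)`, which leaves
finitely many pairs `(a, b)`. So `K ≡ 0` and `σ` is the homography `z / (t₀ + t₁z)`; homographies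
fixing `0` form a group, so every pair is then a symmetry.
-/

open Filter

/-- `(a, b)` (with `a ≠ 0`) is a homographic symmetry of `σ` if `h₁ ∘ σ ∘ h = σ`
as germs at `0`, where `h(z) = z/(a+bz)` and `h₁(w) = w/(c+dw)` for some
homography `h₁` fixing `0`. -/
def IsHomographicSymmetry (σ : ℂ → ℂ) (p : ℂ × ℂ) : Prop :=
  p.1 ≠ 0 ∧ ∃ c d : ℂ, c ≠ 0 ∧
    ∀ᶠ z in nhds (0 : ℂ),
      σ (z / (p.1 + p.2 * z)) / (c + d * σ (z / (p.1 + p.2 * z))) = σ z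

open Topology

section

variable {𝕜 : Type*} [NontriviallyNormedField 𝕜] {a b : 𝕜}

theorem AnalyticAt.analyticAt_dslope {E : Type*} [NormedAddCommGroup E] [NormedSpace 𝕜 E]
    {f : 𝕜 → E} {x : 𝕜} (hf : AnalyticAt 𝕜 f x) : AnalyticAt 𝕜 (dslope f x) x := by
  obtain ⟨p, hp⟩ := hf
  exact ⟨_, hp.has_fpower_series_dslope_fslope⟩

theorem AnalyticAt.exists_eq_id_div {σ : 𝕜 → 𝕜} (hσ : AnalyticAt 𝕜 σ 0) (hσ0 : σ 0 = 0)
    (hσ' : deriv σ 0 ≠ 0) :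
    ∃ τ : 𝕜 → 𝕜, AnalyticAt 𝕜 τ 0 ∧ τ 0 ≠ 0 ∧ ∀ z, σ z = z / τ z := by
  refine ⟨fun z => (dslope σ 0 z)⁻¹, hσ.analyticAt_dslope.inv (by rwa [dslope_same]),
    by simpa [dslope_same] using hσ', fun z => ?_⟩
  simpa [hσ0, div_eq_mul_inv] using (sub_smul_dslope σ 0 z).symm

theorem AnalyticAt.exists_eq_add_mul_add_sq_mul {τ : 𝕜 → 𝕜} (hτ : AnalyticAt 𝕜 τ 0) :
    ∃ K : 𝕜 → 𝕜, AnalyticAt 𝕜 K 0 ∧ ∀ z, τ z = τ 0 + deriv τ 0 * z + z ^ 2 * K z := by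
  refine ⟨dslope (dslope τ 0) 0, hτ.analyticAt_dslope.analyticAt_dslope, fun z => ?_⟩
  have h1 := sub_smul_dslope τ 0 z
  have h2 := sub_smul_dslope (dslope τ 0) 0 z
  simp only [sub_zero, smul_eq_mul, dslope_same] at h1 h2
  linear_combination -h1 - z * h2

theorem eventuallyEq_of_pow_mul_eventuallyEq {f g : 𝕜 → 𝕜} (hf : ContinuousAt f 0)
    (hg : ContinuousAt g 0) (n : ℕ) (h : ∀ᶠ z in 𝓝 0, z ^ n * f z = z ^ n * g z) :
    f =ᶠ[𝓝 0] g := by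
  refine (hf.eventuallyEq_nhds_iff_eventuallyEq_nhdsNE hg).mp ?_
  filter_upwards [nhdsWithin_le_nhds h, self_mem_nhdsWithin] with z hz hz0
  exact mul_left_cancel₀ (pow_ne_zero n hz0) hz

theorem div_div_add_mul_div {v : 𝕜} (hv : v ≠ 0) (c d z : 𝕜) :
    z / v / (c + d * (z / v)) = z / (c * v + d * z) := by
  rw [div_div]
  congr 1
  field_simp

theorem eventually_add_mul_ne_zero (ha : a ≠ 0) : ∀ᶠ z in 𝓝 (0 : 𝕜), a + b * z ≠ 0 :=
  (by fun_prop : ContinuousAt (fun z : 𝕜 => a + b * z) 0).eventually_ne (by simpa using ha)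

theorem analyticAt_div_add_mul (ha : a ≠ 0) : AnalyticAt 𝕜 (fun z => z / (a + b * z)) 0 :=
  analyticAt_id.div (by fun_prop) (by simpa using ha)

theorem tendsto_div_add_mul (ha : a ≠ 0) : Tendsto (fun z => z / (a + b * z)) (𝓝 0) (𝓝 0) := by
  simpa using (analyticAt_div_add_mul (b := b) ha).continuousAt.tendsto

theorem ContinuousAt.comp_div_add_mul {E : Type*} [TopologicalSpace E] {f : 𝕜 → E}
    (hf : ContinuousAt f 0) (ha : a ≠ 0) : ContinuousAt (fun z => f (z / (a + b * z))) 0 :=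
  hf.comp_of_eq (analyticAt_div_add_mul ha).continuousAt (by simp)

theorem hasDerivAt_div_add_mul (ha : a ≠ 0) : HasDerivAt (fun z => z / (a + b * z)) a⁻¹ 0 :=
  ((hasDerivAt_id' 0).fun_div (((hasDerivAt_id' 0).const_mul b).const_add a)
    (by simpa using ha)).congr_deriv (by simp [sq])

theorem eventually_mul_mul_eq_comp_of_functional_eq {τ K : 𝕜 → 𝕜} {d t₀ t₁ : 𝕜} (ha : a ≠ 0)
    (hK : ContinuousAt K 0) (hτK : ∀ z, τ z = t₀ + t₁ * z + z ^ 2 * K z)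
    (hτ : ∀ᶠ z in 𝓝 0, a * τ z = (a + b * z) * τ (z / (a + b * z)) + d * z) :
    ∀ᶠ z in 𝓝 0, a * (a + b * z) * K z = K (z / (a + b * z)) := by
  set F := fun z => a * K z - K (z / (a + b * z)) / (a + b * z)
  have hF : ContinuousAt F 0 :=
    (continuousAt_const.mul hK).sub ((hK.comp_div_add_mul ha).div (by fun_prop) (by simpa using ha))
  -- the affine part `t₀ + t₁ z` of `τ` only contributes a multiple of `z`
  set l := b * t₀ + t₁ + d - a * t₁
  have hFl : ∀ᶠ z in 𝓝 0, z ^ 2 * F z = l * z := by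
    filter_upwards [hτ, eventually_add_mul_ne_zero (b := b) ha] with z hz hu
    rw [hτK, hτK] at hz
    linear_combination hz + (t₁ * z + z ^ 2 * K (z / (a + b * z)) * (a + b * z)⁻¹) *
      mul_inv_cancel₀ hu
  have hl : l = 0 := by
    have h := eventuallyEq_of_pow_mul_eventuallyEq (f := fun z => z * F z) (g := fun _ => l)
      (continuousAt_id.mul hF) continuousAt_const 1
      (by filter_upwards [hFl] with z hz; linear_combination hz)
    have h0 := h.eq_of_nhds
    rw [zero_mul] at h0
    exact h0.symm
  have hF0 : F =ᶠ[𝓝 0] fun _ => 0 :=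
    eventuallyEq_of_pow_mul_eventuallyEq hF continuousAt_const 2
      (by filter_upwards [hFl] with z hz; rw [hz, hl]; ring)
  filter_upwards [hF0, eventually_add_mul_ne_zero (b := b) ha] with z hz hu
  linear_combination (a + b * z) * hz + K (z / (a + b * z)) * mul_inv_cancel₀ hu

theorem eventually_mul_pow_mul_eq_comp {K H : 𝕜 → 𝕜} {m : ℕ} (ha : a ≠ 0)
    (hH : ContinuousAt H 0) (hKH : ∀ᶠ z in 𝓝 0, K z = z ^ m * H z)
    (hK : ∀ᶠ z in 𝓝 0, a * (a + b * z) * K z = K (z / (a + b * z))) :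
    ∀ᶠ z in 𝓝 0, a * (a + b * z) ^ (m + 1) * H z = H (z / (a + b * z)) := by
  refine eventuallyEq_of_pow_mul_eventuallyEq (by fun_prop) (hH.comp_div_add_mul ha) m ?_
  filter_upwards [hK, hKH, (tendsto_div_add_mul ha).eventually hKH,
    eventually_add_mul_ne_zero (b := b) ha] with z hz hKz hKw hu
  rw [hKz, hKw, div_pow, div_mul_eq_mul_div, eq_div_iff (pow_ne_zero m hu)] at hz
  linear_combination hz

theorem pow_eq_one_and_mul_eq_of_mul_pow_mul_eq_comp {H : 𝕜 → 𝕜} {m : ℕ} (ha : a ≠ 0)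
    (hH : DifferentiableAt 𝕜 H 0) (hH0 : H 0 ≠ 0)
    (h : ∀ᶠ z in 𝓝 0, a * (a + b * z) ^ (m + 1) * H z = H (z / (a + b * z))) :
    a ^ (m + 2) = 1 ∧ (m + 1) * b * H 0 = deriv H 0 * (1 - a) := by
  have hroot : a ^ (m + 2) = 1 := by
    have h0 := h.self_of_nhds
    simp only [mul_zero, add_zero, zero_div] at h0
    exact mul_right_cancel₀ hH0 (by linear_combination h0)
  have hL := (((((hasDerivAt_id' 0).const_mul b).const_add a).fun_pow (m + 1)).const_mul a).fun_mul
    hH.hasDerivAt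
  have hR := hH.hasDerivAt.comp_of_eq 0 (hasDerivAt_div_add_mul (b := b) ha) (by simp)
  have hd := hL.deriv.symm.trans ((EventuallyEq.deriv_eq h).trans hR.deriv)
  simp only [mul_zero, add_zero, mul_one, Nat.add_sub_cancel] at hd
  push_cast at hd
  refine ⟨hroot, ?_⟩
  linear_combination a * hd - ((m + 1) * b * H 0 + a * deriv H 0) * hroot +
    deriv H 0 * mul_inv_cancel₀ ha

theorem finite_setOf_eventually_mul_mul_eq_comp [CharZero 𝕜] {K : 𝕜 → 𝕜}
    (hK : AnalyticAt 𝕜 K 0) (hK0 : ¬∀ᶠ z in 𝓝 0, K z = 0) :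
    {p : 𝕜 × 𝕜 | p.1 ≠ 0 ∧
      ∀ᶠ z in 𝓝 0, p.1 * (p.1 + p.2 * z) * K z = K (z / (p.1 + p.2 * z))}.Finite := by
  obtain ⟨m, H, hH, hH0, hKH⟩ := hK.exists_eventuallyEq_pow_smul_nonzero_iff.mpr hK0
  simp only [sub_zero, smul_eq_mul] at hKH
  refine ((Polynomial.nthRootsFinset (m + 2) (1 : 𝕜)).finite_toSet.image
    fun a => (a, deriv H 0 * (1 - a) / ((m + 1) * H 0))).subset ?_
  rintro ⟨a, b⟩ ⟨ha, hab⟩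
  obtain ⟨hroot, hb⟩ := pow_eq_one_and_mul_eq_of_mul_pow_mul_eq_comp ha hH.differentiableAt hH0
    (eventually_mul_pow_mul_eq_comp ha hH.continuousAt hKH hab)
  refine ⟨a, (Polynomial.mem_nthRootsFinset (by omega) 1).mpr hroot, ?_⟩
  dsimp only at hb ⊢
  rw [← hb, mul_div_mul_right _ _ hH0, mul_div_cancel_left₀ _ (Nat.cast_add_one_ne_zero m)]

end

theorem isHomographicSymmetry_of_eventuallyEq {σ : ℂ → ℂ} {a' b' : ℂ} (ha' : a' ≠ 0)
    (hσ : ∀ᶠ z in 𝓝 0, σ z = z / (a' + b' * z)) {a : ℂ} (b : ℂ) (ha : a ≠ 0) :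
    IsHomographicSymmetry σ (a, b) := by
  refine ⟨ha, a⁻¹, b' - a⁻¹ * (a' * b + b'), inv_ne_zero ha, ?_⟩
  filter_upwards [hσ, (tendsto_div_add_mul ha).eventually hσ, eventually_add_mul_ne_zero ha,
    eventually_add_mul_ne_zero (mul_ne_zero ha' ha)] with z hz hσh hu hv
  rw [hσh, div_div_add_mul_div hu, hz,
    show a' * (a + b * z) + b' * z = a' * a + (a' * b + b') * z by ring, div_div_add_mul_div hv]
  congr 1
  field_simp
  ring

theorem IsHomographicSymmetry.exists_functional_eq {σ τ : ℂ → ℂ} {a b : ℂ}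
    (h : IsHomographicSymmetry σ (a, b)) (hτ : ContinuousAt τ 0) (hτ0 : τ 0 ≠ 0)
    (hστ : ∀ z, σ z = z / τ z) :
    ∃ d, ∀ᶠ z in 𝓝 0, a * τ z = (a + b * z) * τ (z / (a + b * z)) + d * z := by
  obtain ⟨ha, c, d, -, heq⟩ := h
  have hv : ContinuousAt (fun z => (a + b * z) * τ (z / (a + b * z))) 0 :=
    (by fun_prop : ContinuousAt (fun z => a + b * z) 0).mul (hτ.comp_div_add_mul ha)
  have hτF : τ =ᶠ[𝓝 0] fun z => c * ((a + b * z) * τ (z / (a + b * z))) + d * z := by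
    refine (hτ.eventuallyEq_nhds_iff_eventuallyEq_nhdsNE (by fun_prop)).mp ?_
    filter_upwards [nhdsWithin_le_nhds heq,
      nhdsWithin_le_nhds (hv.eventually_ne (by simpa using mul_ne_zero ha hτ0 : _ ≠ (0 : ℂ))),
      self_mem_nhdsWithin] with z hz hvz hz0
    rw [hστ, hστ, div_div z, div_div_add_mul_div hvz] at hz
    exact inv_injective (mul_left_cancel₀ hz0 (by simpa only [div_eq_mul_inv] using hz)).symm
  have hca : c * a = 1 := by
    have h0 := hτF.eq_of_nhds
    simp only [mul_zero, add_zero, zero_div] at h0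
    exact mul_right_cancel₀ hτ0 (by linear_combination -h0)
  refine ⟨a * d, ?_⟩
  filter_upwards [hτF] with z hz
  rw [hz]
  linear_combination (a + b * z) * τ (z / (a + b * z)) * hca

/-- If a germ `σ ∈ Diff(ℂ,0)` has infinitely many homographic symmetries, then
`σ` is itself a homography, and every homography fixing `0` is then a
homographic symmetry of `σ`. -/
theorem stmt_5 (σ : ℂ → ℂ) (hσ : AnalyticAt ℂ σ 0) (hσ0 : σ 0 = 0)
    (hσ' : deriv σ 0 ≠ 0)
    (hinf : {p : ℂ × ℂ | IsHomographicSymmetry σ p}.Infinite) :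
    (∃ a' b' : ℂ, a' ≠ 0 ∧
        ∀ᶠ z in nhds (0 : ℂ), σ z = z / (a' + b' * z)) ∧
      ∀ a b : ℂ, a ≠ 0 → IsHomographicSymmetry σ (a, b) := by
  obtain ⟨τ, hτ, hτ0, hστ⟩ := hσ.exists_eq_id_div hσ0 hσ'
  obtain ⟨K, hK, hτK⟩ := hτ.exists_eq_add_mul_add_sq_mul
  have hK0 : ∀ᶠ z in 𝓝 0, K z = 0 := by
    by_contra hK0
    refine hinf ((finite_setOf_eventually_mul_mul_eq_comp hK hK0).subset ?_)
    rintro ⟨a, b⟩ hab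
    obtain ⟨d, hd⟩ := hab.exists_functional_eq hτ.continuousAt hτ0 hστ
    exact ⟨hab.1, eventually_mul_mul_eq_comp_of_functional_eq hab.1 hK.continuousAt hτK hd⟩
  have hhom : ∀ᶠ z in 𝓝 0, σ z = z / (τ 0 + deriv τ 0 * z) := by
    filter_upwards [hK0] with z hz
    rw [hστ, hτK, hz, mul_zero, add_zero]
  exact ⟨⟨_, _, hτ0, hhom⟩, fun a b ha => isHomographicSymmetry_of_eventuallyEq hτ0 hhom b ha⟩
end

section
/- In the formal power series ring ℂ⟦x,y⟧ (MvPowerSeries over ℂ in two variables), the element x³y² does not belong to the ideal generated by 2x³y − y³ and xy² − x⁴. -/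
/-!
The linear form `L = [x³y²] + [x⁶] + 2 [y⁴]` on power series vanishes on the ideal: in
`a (2x³y − y³) + b (xy² − x⁴)` the coefficients of `x³y²`, `x⁶` and `y⁴` are `2a₀₁ + b₂₀`, `−b₂₀`
and `−a₀₁`. But `L (x³y²) = 1`.
-/

open MvPowerSeries Finsupp

section

variable {R : Type*} [CommRing R]

noncomputable def expXY (i j : ℕ) : Fin 2 →₀ ℕ := single 0 i + single 1 j

@[simp]
theorem expXY_apply_zero (i j : ℕ) : expXY i j 0 = i := by simp [expXY]

@[simp]
theorem expXY_apply_one (i j : ℕ) : expXY i j 1 = j := by simp [expXY]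

@[simp]
theorem expXY_le_expXY {i j k l : ℕ} : expXY i j ≤ expXY k l ↔ i ≤ k ∧ j ≤ l := by
  simp [Finsupp.le_def, Fin.forall_fin_two]

@[simp]
theorem expXY_sub_expXY (i j k l : ℕ) : expXY i j - expXY k l = expXY (i - k) (j - l) := by
  ext s
  fin_cases s <;> simp

@[simp]
theorem expXY_inj {i j k l : ℕ} : expXY i j = expXY k l ↔ i = k ∧ j = l := by
  refine ⟨fun h ↦ ⟨?_, ?_⟩, fun h ↦ by rw [h.1, h.2]⟩
  · simpa using DFunLike.congr_fun h 0
  · simpa using DFunLike.congr_fun h 1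

theorem monomial_expXY (i j : ℕ) (r : R) :
    monomial (expXY i j) r = C r * X 0 ^ i * X 1 ^ j := by
  rw [X_pow_eq, X_pow_eq, ← monomial_zero_eq_C_apply, monomial_mul_monomial,
    monomial_mul_monomial, zero_add, mul_one, mul_one, expXY]

noncomputable def separatingForm : MvPowerSeries (Fin 2) R →ₗ[R] R :=
  coeff (expXY 3 2) + coeff (expXY 6 0) + 2 • coeff (expXY 0 4)

theorem separatingForm_mul_two_mul_X_pow_three_mul_X_sub_X_pow_three
    (a : MvPowerSeries (Fin 2) R) :
    separatingForm (a * (2 * X 0 ^ 3 * X 1 - X 1 ^ 3)) = 0 := by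
  have hmon : (2 * X 0 ^ 3 * X 1 - X 1 ^ 3 : MvPowerSeries (Fin 2) R) =
      monomial (expXY 3 1) 2 - monomial (expXY 0 3) 1 := by
    simp only [monomial_expXY, map_ofNat, map_one]
    ring
  rw [hmon]
  simp [separatingForm, mul_sub, coeff_mul_monomial, mul_comm]

theorem separatingForm_mul_X_mul_X_pow_two_sub_X_pow_four (b : MvPowerSeries (Fin 2) R) :
    separatingForm (b * (X 0 * X 1 ^ 2 - X 0 ^ 4)) = 0 := by
  have hmon : (X 0 * X 1 ^ 2 - X 0 ^ 4 : MvPowerSeries (Fin 2) R) =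
      monomial (expXY 1 2) 1 - monomial (expXY 4 0) 1 := by
    simp only [monomial_expXY, map_one]
    ring
  rw [hmon]
  simp [separatingForm, mul_sub, coeff_mul_monomial]

theorem separatingForm_X_pow_three_mul_X_pow_two :
    separatingForm (X 0 ^ 3 * X 1 ^ 2 : MvPowerSeries (Fin 2) R) = 1 := by
  have hmon : (X 0 ^ 3 * X 1 ^ 2 : MvPowerSeries (Fin 2) R) = monomial (expXY 3 2) 1 := by
    simp only [monomial_expXY, map_one]
    ring
  rw [hmon]
  simp [separatingForm, coeff_monomial]

theorem X_pow_three_mul_X_pow_two_notMem_span [Nontrivial R] :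
    (X 0 ^ 3 * X 1 ^ 2 : MvPowerSeries (Fin 2) R) ∉
      Ideal.span {2 * X 0 ^ 3 * X 1 - X 1 ^ 3, X 0 * X 1 ^ 2 - X 0 ^ 4} := by
  intro hmem
  obtain ⟨a, b, hab⟩ := Ideal.mem_span_pair.mp hmem
  have hform := congrArg separatingForm hab
  rw [map_add, separatingForm_mul_two_mul_X_pow_three_mul_X_sub_X_pow_three,
    separatingForm_mul_X_mul_X_pow_two_sub_X_pow_four,
    separatingForm_X_pow_three_mul_X_pow_two, add_zero] at hform
  exact zero_ne_one hform

end

/-- In `ℂ⟦x,y⟧`, the element `x³y²` does not belong to the ideal generated by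
`2x³y − y³` and `xy² − x⁴`. -/
theorem stmt_9 :
    (X 0 ^ 3 * X 1 ^ 2 : MvPowerSeries (Fin 2) ℂ) ∉
      Ideal.span ({2 * X 0 ^ 3 * X 1 - X 1 ^ 3, X 0 * X 1 ^ 2 - X 0 ^ 4} :
        Set (MvPowerSeries (Fin 2) ℂ)) :=
  X_pow_three_mul_X_pow_two_notMem_span
end

section
/- Let R > 0, and let U : ℂ → ℂ be analytic on {z ∈ ℂ : ‖z‖ > R} with U(z) → 0 as ‖z‖ → ∞ (i.e. U tends to 0 along the cobounded filter). Let G be an infinite subgroup of the multiplicative group ℂ* such that for every a ∈ G and every z ∈ ℂ with ‖z‖ > R and ‖a·z‖ > R one has U(a·z) = U(z). Then U(z) = 0 for every z with ‖z‖ > R. -/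
open Filter Topology Set

/-!
If some `a ∈ G` has `‖a‖ ≠ 1`, then (replacing `a` by `a⁻¹`) we may assume `‖a‖ > 1`; the orbit
`aⁿ z` escapes to infinity while `U` stays equal to `U z` along it, so `U z = 0`.
Otherwise `G` is an infinite subgroup of the compact unit circle, hence accumulates at some point
and therefore, taking quotients of nearby elements, at `1`.
The identity theorem applied to `w ↦ U (w z)` on a half-plane `re w > R / ‖z‖` containing `1`
makes this function constant there, and letting `w → +∞` along the reals gives `U z = 0`.
-/

namespace Subgroup

variable {G : Type*} [Group G] [TopologicalSpace G] [IsTopologicalGroup G] [T1Space G]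
  (H : Subgroup G)

theorem accPt_one_of_accPt {c : G} (hc : AccPt c (𝓟 (H : Set G))) : AccPt 1 (𝓟 (H : Set G)) := by
  rw [accPt_iff_nhds] at hc ⊢
  intro V hV
  have hquot : Tendsto (fun p : G × G => p.1⁻¹ * p.2) (𝓝 (c, c)) (𝓝 1) := by
    simpa using (show Continuous fun p : G × G => p.1⁻¹ * p.2 by fun_prop).tendsto (c, c)
  obtain ⟨W₁, hW₁, W₂, hW₂, hW⟩ := mem_nhds_prod_iff.mp (hquot hV)
  obtain ⟨x, ⟨hxW, hxH⟩, hxc⟩ := hc (W₁ ∩ W₂) (inter_mem hW₁ hW₂)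
  obtain ⟨y, ⟨⟨hyW, hyx⟩, hyH⟩, -⟩ :=
    hc (W₂ ∩ {x}ᶜ) (inter_mem hW₂ (isOpen_compl_singleton.mem_nhds hxc.symm))
  refine ⟨x⁻¹ * y, ⟨hW (mk_mem_prod hxW.1 hyW), H.mul_mem (H.inv_mem hxH) hyH⟩, ?_⟩
  rw [Ne, inv_mul_eq_one]
  exact fun h => hyx h.symm

theorem accPt_one_of_infinite_of_subset_isCompact (hH : (H : Set G).Infinite) {K : Set G}
    (hK : IsCompact K) (hHK : (H : Set G) ⊆ K) : AccPt 1 (𝓟 (H : Set G)) :=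
  let ⟨_, _, hc⟩ := hH.exists_accPt_of_subset_isCompact hK hHK
  H.accPt_one_of_accPt hc

end Subgroup

theorem Complex.isCompact_setOf_units_norm_eq_one : IsCompact {u : ℂˣ | ‖(u : ℂ)‖ = 1} := by
  rw [Units.isEmbedding_val₀.isInducing.isCompact_iff]
  convert isCompact_sphere (0 : ℂ) 1
  ext z
  constructor
  · rintro ⟨u, hu, rfl⟩
    simpa using hu
  · intro hz
    have hz1 : ‖z‖ = 1 := by simpa using hz
    exact ⟨Units.mk0 z (norm_ne_zero_iff.mp (hz1 ▸ one_ne_zero)), hz1, rfl⟩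

theorem Complex.frequently_nhdsNE_one_mem_of_infinite (G : Subgroup ℂˣ)
    (hG : (G : Set ℂˣ).Infinite) (hnorm : ∀ a ∈ G, ‖(a : ℂ)‖ = 1) :
    ∃ᶠ w in 𝓝[≠] (1 : ℂ), w ∈ ((↑) : ℂˣ → ℂ) '' G := by
  have hacc := G.accPt_one_of_infinite_of_subset_isCompact hG
    isCompact_setOf_units_norm_eq_one hnorm
  have := hacc.map Units.continuous_val.continuousAt Units.val_injective
  rwa [map_principal, Units.val_one, accPt_iff_frequently_nhdsNE] at this

theorem Complex.exists_mem_one_lt_norm_of_norm_ne_one (G : Subgroup ℂˣ)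
    (h : ∃ a ∈ G, ‖(a : ℂ)‖ ≠ 1) : ∃ a ∈ G, 1 < ‖(a : ℂ)‖ := by
  obtain ⟨a, ha, han⟩ := h
  rcases han.lt_or_gt with hlt | hgt
  · refine ⟨a⁻¹, G.inv_mem ha, ?_⟩
    rw [Units.val_inv_eq_inv_val, norm_inv]
    exact (one_lt_inv₀ (norm_pos_iff.mpr a.ne_zero)).mpr hlt
  · exact ⟨a, ha, hgt⟩

section Vanishing

variable {R : ℝ} {U : ℂ → ℂ} {z : ℂ}

theorem eq_zero_of_forall_pow_mul_eq (hR : 0 ≤ R)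
    (hlim : Tendsto U (Bornology.cobounded ℂ) (𝓝 0)) (hz : R < ‖z‖) {a : ℂ} (ha : 1 < ‖a‖)
    (hinv : ∀ w : ℂ, R < ‖w‖ → R < ‖a * w‖ → U (a * w) = U w) : U z = 0 := by
  have hz0 : 0 < ‖z‖ := hR.trans_lt hz
  have hnorm (n : ℕ) : ‖a ^ n * z‖ = ‖a‖ ^ n * ‖z‖ := by rw [norm_mul, norm_pow]
  have hdom (n : ℕ) : R < ‖a ^ n * z‖ := by
    rw [hnorm]
    exact hz.trans_le (le_mul_of_one_le_left hz0.le (one_le_pow₀ ha.le))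
  have horbit (n : ℕ) : U (a ^ n * z) = U z := by
    induction n with
    | zero => simp
    | succ n ih =>
      have hsucc : a ^ (n + 1) * z = a * (a ^ n * z) := by ring
      rw [hsucc, hinv _ (hdom n) (hsucc ▸ hdom (n + 1)), ih]
  have hescape : Tendsto (fun n : ℕ => a ^ n * z) atTop (Bornology.cobounded ℂ) := by
    rw [← tendsto_norm_atTop_iff_cobounded]
    simpa only [hnorm] using (tendsto_pow_atTop_atTop_of_one_lt ha).atTop_mul_const hz0
  exact tendsto_const_nhds_iff.mp ((hlim.comp hescape).congr horbit)

theorem eq_zero_of_frequently_mul_eq (hR : 0 ≤ R) (hU : AnalyticOnNhd ℂ U {w : ℂ | R < ‖w‖})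
    (hlim : Tendsto U (Bornology.cobounded ℂ) (𝓝 0)) (hz : R < ‖z‖)
    (hfreq : ∃ᶠ w in 𝓝[≠] (1 : ℂ), U (w * z) = U z) : U z = 0 := by
  have hz0 : 0 < ‖z‖ := hR.trans_lt hz
  set H : Set ℂ := {w : ℂ | R / ‖z‖ < w.re}
  have hdom : ∀ w ∈ H, R < ‖w * z‖ := fun w hw => by
    rw [norm_mul, ← div_lt_iff₀ hz0]
    exact hw.out.trans_le (Complex.re_le_norm w)
  have hcomp : AnalyticOnNhd ℂ (fun w => U (w * z)) H := fun w hw =>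
    (hU _ (hdom w hw)).comp (f := fun w => w * z) (analyticAt_id.mul analyticAt_const)
  have hconst : EqOn (fun w => U (w * z)) (fun _ => U z) H :=
    hcomp.eqOn_of_preconnected_of_frequently_eq analyticOnNhd_const
      (convex_halfSpace_re_gt _).isPreconnected ((div_lt_one hz0).mpr hz) hfreq
  have hescape : Tendsto (fun t : ℝ => (t : ℂ) * z) atTop (Bornology.cobounded ℂ) := by
    rw [← tendsto_norm_atTop_iff_cobounded]
    refine (tendsto_abs_atTop_atTop.atTop_mul_const hz0).congr fun t => ?_
    rw [norm_mul, Complex.norm_real, Real.norm_eq_abs]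
  have hray : ∀ᶠ t : ℝ in atTop, U ((t : ℂ) * z) = U z := by
    filter_upwards [eventually_gt_atTop (R / ‖z‖)] with t ht
    exact hconst (by simpa [H] using ht)
  exact tendsto_const_nhds_iff.mp ((hlim.comp hescape).congr' hray)

end Vanishing

/-- If `U` is analytic on `{‖z‖ > R}`, tends to `0` at infinity, and is
invariant under an infinite subgroup `G` of `ℂ*` (acting linearly, whenever both
points lie in the domain), then `U` vanishes identically on `{‖z‖ > R}`. -/
theorem stmt_11 (R : ℝ) (hR : 0 < R) (U : ℂ → ℂ)
    (hU : AnalyticOnNhd ℂ U {z : ℂ | R < ‖z‖})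
    (hlim : Tendsto U (Bornology.cobounded ℂ) (nhds 0))
    (G : Subgroup ℂˣ) (hG : (G : Set ℂˣ).Infinite)
    (hinv : ∀ a ∈ G, ∀ z : ℂ, R < ‖z‖ → R < ‖(a : ℂ) * z‖ →
      U ((a : ℂ) * z) = U z) :
    ∀ z : ℂ, R < ‖z‖ → U z = 0 := by
  intro z hz
  by_cases hcircle : ∀ a ∈ G, ‖(a : ℂ)‖ = 1
  · refine eq_zero_of_frequently_mul_eq hR.le hU hlim hz ?_
    refine (Complex.frequently_nhdsNE_one_mem_of_infinite G hG hcircle).mono ?_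
    rintro _ ⟨a, ha, rfl⟩
    exact hinv a ha z hz (by rwa [norm_mul, hcircle a ha, one_mul])
  · push Not at hcircle
    obtain ⟨a, ha, han⟩ := Complex.exists_mem_one_lt_norm_of_norm_ne_one G hcircle
    exact eq_zero_of_forall_pow_mul_eq hR.le hlim hz han (hinv a ha)
end
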